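/- If G is a plane graph, then for every positive integer k, P(G;k) equals the number of admissible k-valuations of the medial graph G_m. -/

import Mathlib

open Polynomial

namespace Penrose

/-- Addition in the Klein four-group `Bool × Bool` (componentwise xor). -/
def kAdd (p q : Bool × Bool) : Bool × Bool := (xor p.1 q.1, xor p.2 q.2)

lemma kAdd_eq_zero_iff : ∀ p q : Bool × Bool, kAdd p q = (false, false) ↔ p = q := by decide
lemma kAdd_eq_right_iff : ∀ p q : Bool × Bool, kAdd p q = q ↔ p = (false, false) := by decide
lemma kAdd_kAdd : ∀ p q : Bool × Bool, kAdd (kAdd p q) q = p := by decide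

/-- The flags (corner triples) of a ribbon graph with edge set `E`: each edge carries
four flags. -/
abbrev Flags (E : Type) := E × Bool × Bool

/-- A ribbon graph (cellularly embedded graph, possibly non-orientable) with edge set `E`,
in the flag (graph-encoded map) model.  The involution `σ0` (crossing edge `e`) acts on the
four flags of `e` by adding `a e` in the Klein four-group, the involution `σ2` (switching
sides of `e`) by adding `b e`, and the fixed-point-free involution `s1` (moving to the
adjacent edge-end in the same vertex-face corner) is given as data.
Vertices are the orbits of `⟨s1, σ2⟩`, edges the orbits of `⟨σ0, σ2⟩`, and the faces
(boundary components) the orbits of `⟨σ0, s1⟩`. -/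
structure RibbonGraph (E : Type) where
  s1 : Flags E → Flags E
  s1_invol : ∀ f, s1 (s1 f) = f
  s1_ne : ∀ f, s1 f ≠ f
  a : E → Bool × Bool
  b : E → Bool × Bool
  a_ne : ∀ e, a e ≠ (false, false)
  b_ne : ∀ e, b e ≠ (false, false)
  ab_ne : ∀ e, a e ≠ b e

namespace RibbonGraph

variable {E : Type}

/-- The involution crossing an edge. -/
def σ0 (G : RibbonGraph E) (f : Flags E) : Flags E := (f.1, kAdd f.2 (G.a f.1))

/-- The involution changing the side (face) of an edge, staying at the same vertex. -/
def σ2 (G : RibbonGraph E) (f : Flags E) : Flags E := (f.1, kAdd f.2 (G.b f.1))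

lemma σ2_σ2 (G : RibbonGraph E) (f : Flags E) : G.σ2 (G.σ2 f) = f := by
  cases f with
  | mk e p => simp [σ2, kAdd_kAdd]

/-- The partial Petrial `G^{τ(A)}`: give a half-twist to every edge in `A`
(replace `σ0` by `σ0 σ2` on the flags of the edges of `A`). -/
def petrial [DecidableEq E] (G : RibbonGraph E) (A : Finset E) : RibbonGraph E where
  s1 := G.s1
  s1_invol := G.s1_invol
  s1_ne := G.s1_ne
  a := fun e => if e ∈ A then kAdd (G.a e) (G.b e) else G.a e
  b := G.b
  a_ne := by
    intro e
    by_cases h : e ∈ A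
    · simpa [h, kAdd_eq_zero_iff] using G.ab_ne e
    · simpa [h] using G.a_ne e
  b_ne := G.b_ne
  ab_ne := by
    intro e
    by_cases h : e ∈ A
    · simpa [h, kAdd_eq_right_iff] using G.a_ne e
    · simpa [h] using G.ab_ne e

/-- The partial dual `G^{δ(A)}`: swap the roles of `σ0` and `σ2` on the flags of the
edges of `A`. -/
def pdual [DecidableEq E] (G : RibbonGraph E) (A : Finset E) : RibbonGraph E where
  s1 := G.s1
  s1_invol := G.s1_invol
  s1_ne := G.s1_ne
  a := fun e => if e ∈ A then G.b e else G.a e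
  b := fun e => if e ∈ A then G.a e else G.b e
  a_ne := by
    intro e
    by_cases h : e ∈ A
    · simpa [h] using G.b_ne e
    · simpa [h] using G.a_ne e
  b_ne := by
    intro e
    by_cases h : e ∈ A
    · simpa [h] using G.a_ne e
    · simpa [h] using G.b_ne e
  ab_ne := by
    intro e
    by_cases h : e ∈ A
    · simpa [h] using (G.ab_ne e).symm
    · simpa [h] using G.ab_ne e

/-- One step of the boundary (face) walk. -/
def faceStep (G : RibbonGraph E) (x y : Flags E) : Prop := y = G.σ0 x ∨ y = G.s1 x

/-- The number of faces (boundary components) of `G`. -/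
noncomputable def nFaces (G : RibbonGraph E) : ℕ := Nat.card (Quot G.faceStep)

/-- One step of the walk around a vertex. -/
def vertStep (G : RibbonGraph E) (x y : Flags E) : Prop := y = G.σ2 x ∨ y = G.s1 x

/-- The number of vertices of `G`. -/
noncomputable def nVerts (G : RibbonGraph E) : ℕ := Nat.card (Quot G.vertStep)

/-- The number of edges of `G`. -/
noncomputable def nEdges (_G : RibbonGraph E) : ℕ := Nat.card E

/-- One step of a walk in (the total space of) `G`. -/
def compStep (G : RibbonGraph E) (x y : Flags E) : Prop :=
  y = G.σ0 x ∨ y = G.σ2 x ∨ y = G.s1 x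

/-- The number of connected components of `G`. -/
noncomputable def nComps (G : RibbonGraph E) : ℕ := Nat.card (Quot G.compStep)

/-- Two flags lie at the same vertex. -/
def VertexConn (G : RibbonGraph E) : Flags E → Flags E → Prop := Relation.EqvGen G.vertStep

/-- `G` is connected. -/
def Connected (G : RibbonGraph E) : Prop := ∀ x y : Flags E, Relation.EqvGen G.compStep x y

/-- `G` is cubic: every vertex has exactly three edge-ends, i.e. six flags. -/
def Cubic (G : RibbonGraph E) : Prop :=
  ∀ x : Flags E, Nat.card {y : Flags E // G.VertexConn x y} = 6

/-- `G` is orientable. -/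
def Orientable (G : RibbonGraph E) : Prop :=
  ∃ o : Flags E → Bool, ∀ f, o (G.σ0 f) = !(o f) ∧ o (G.σ2 f) = !(o f) ∧ o (G.s1 f) = !(o f)

/-- `G` is a plane graph: orientable and of total genus `0` (Euler's formula). -/
def Plane (G : RibbonGraph E) : Prop :=
  G.Orientable ∧ G.nVerts + G.nFaces = G.nEdges + 2 * G.nComps

/-- `G` is checkerboard colourable: its faces admit a proper 2-colouring. -/
def CheckerboardColourable (G : RibbonGraph E) : Prop :=
  ∃ c : Flags E → Bool, ∀ f, c (G.σ0 f) = c f ∧ c (G.s1 f) = c f ∧ c (G.σ2 f) = !(c f)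

/-- The (topological) Penrose polynomial
`P(G;λ) = ∑_{A ⊆ E(G)} (−1)^{|A|} λ^{f(G^{τ(A)})}`. -/
noncomputable def penrose [Fintype E] [DecidableEq E] (G : RibbonGraph E) : Polynomial ℤ :=
  ∑ A ∈ (Finset.univ : Finset E).powerset,
    (-1 : Polynomial ℤ) ^ A.card * X ^ (G.petrial A).nFaces

/-- The boundary-crossing involution of `G − e`: pass through the deleted edge `e`
via `σ2`, and cross any other edge via `σ0`. -/
def delσ0 [DecidableEq E] (G : RibbonGraph E) (e : E) (f : Flags E) : Flags E :=
  if f.1 = e then G.σ2 f else G.σ0 f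

/-- One step of the boundary walk of `G − e`. -/
def faceStepDel [DecidableEq E] (G : RibbonGraph E) (e : E) (x y : Flags E) : Prop :=
  y = G.delσ0 e x ∨ y = G.s1 x

/-- The number of faces (boundary components) of `G − e`. -/
noncomputable def nFacesDel [DecidableEq E] (G : RibbonGraph E) (e : E) : ℕ :=
  Nat.card (Quot (G.faceStepDel e))

/-- The Penrose polynomial `P(G − e; λ)` of the graph obtained from `G` by deleting the
edge `e`. -/
noncomputable def penroseDel [Fintype E] [DecidableEq E] (G : RibbonGraph E) (e : E) :
    Polynomial ℤ :=
  ∑ A ∈ ((Finset.univ : Finset E).erase e).powerset,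
    (-1 : Polynomial ℤ) ^ A.card * X ^ ((G.petrial A).nFacesDel e)

/-- The Penrose polynomial `P(G/e; λ)` of the contraction `G/e := G^{δ(e)} − e`. -/
noncomputable def penroseContr [Fintype E] [DecidableEq E] (G : RibbonGraph E) (e : E) :
    Polynomial ℤ :=
  (G.pdual {e}).penroseDel e

/-- One step of a walk in `G − e` (together with the leftover vertices of `e`). -/
def compStepDel (G : RibbonGraph E) (e : E) (x y : Flags E) : Prop :=
  (x.1 ≠ e ∧ y = G.σ0 x) ∨ y = G.σ2 x ∨ y = G.s1 x

/-- The number of connected components of `G − e`. -/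
noncomputable def nCompsDel (G : RibbonGraph E) (e : E) : ℕ :=
  Nat.card (Quot (G.compStepDel e))

/-- The edge `e` is a bridge of `G`: deleting it increases the number of connected
components. -/
def IsBridge (G : RibbonGraph E) (e : E) : Prop := G.nComps < G.nCompsDel e

/-- The edge `e` is a non-twisted loop bounding a 2-cell (a trivial loop): one of its
sides is a face traversing only `e`, once. -/
def IsTrivialLoop (G : RibbonGraph E) (e : E) : Prop :=
  ∃ p : Bool × Bool, G.s1 (e, p) = G.σ0 (e, p)

/-- Isomorphism (equivalence) of ribbon graphs over the same edge set. -/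
def IsIso (G H : RibbonGraph E) : Prop :=
  ∃ ψ : Flags E ≃ Flags E, (∀ f, ψ (G.s1 f) = H.s1 (ψ f)) ∧
    (∀ f, ψ (G.σ0 f) = H.σ0 (ψ f)) ∧ (∀ f, ψ (G.σ2 f) = H.σ2 (ψ f))

/-- Given a Penrose state `σ` of the medial graph `G_m` (a choice, at the medial vertex
`v_e` of each edge `e` of `G`, of the crossing transition if `σ e = true` and of the white
split otherwise), the transition used at `v_e` by the closed curves of the state. -/
def stateσ0 (G : RibbonGraph E) (σ : E → Bool) (f : Flags E) : Flags E :=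
  if σ f.1 then G.σ0 (G.σ2 f) else G.σ0 f

/-- The number `c(s)` of closed curves of the Penrose state `σ` of the medial graph. -/
noncomputable def stateCurves (G : RibbonGraph E) (σ : E → Bool) : ℕ :=
  Nat.card (Quot (fun x y : Flags E => y = G.stateσ0 σ x ∨ y = G.s1 x))

/-- A `k`-valuation of the medial graph `G_m`: an edge colouring of `G_m` (edges of `G_m`
correspond to `s1`-orbits of flags of `G`). -/
def IsValuation {n : ℕ} (G : RibbonGraph E) (c : Flags E → Fin n) : Prop :=
  ∀ f, c (G.s1 f) = c f

/-- The medial vertex `v_e` is total in the valuation `c`: all four incident medial edges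
receive the same colour. -/
def TotalAt {n : ℕ} (G : RibbonGraph E) (c : Flags E → Fin n) (e : E) : Prop :=
  ∀ p q : Bool × Bool, c (e, p) = c (e, q)

/-- The medial vertex `v_e` has white-split type with two distinct colours. -/
def WhiteAt {n : ℕ} (G : RibbonGraph E) (c : Flags E → Fin n) (e : E) : Prop :=
  (∀ p : Bool × Bool, c (G.σ0 (e, p)) = c (e, p)) ∧
    c (e, (false, false)) ≠ c (G.σ2 (e, (false, false)))

/-- The medial vertex `v_e` has crossing type with two distinct colours. -/
def CrossAt {n : ℕ} (G : RibbonGraph E) (c : Flags E → Fin n) (e : E) : Prop :=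
  (∀ p : Bool × Bool, c (G.σ0 (G.σ2 (e, p))) = c (e, p)) ∧
    c (e, (false, false)) ≠ c (G.σ0 (e, (false, false)))

/-- An admissible valuation: at every medial vertex the two monochromatic pairs have
distinct colours and form a white split or a crossing. -/
def Admissible {n : ℕ} (G : RibbonGraph E) (c : Flags E → Fin n) : Prop :=
  G.IsValuation c ∧ ∀ e : E, G.WhiteAt c e ∨ G.CrossAt c e

/-- A permissible valuation: every medial vertex is of white-split, crossing or total
type. -/
def Permissible {n : ℕ} (G : RibbonGraph E) (c : Flags E → Fin n) : Prop :=
  G.IsValuation c ∧ ∀ e : E, G.WhiteAt c e ∨ G.CrossAt c e ∨ G.TotalAt c e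

/-- The number of crossing-type medial vertices of a valuation. -/
noncomputable def crCount {n : ℕ} (G : RibbonGraph E) (c : Flags E → Fin n) : ℕ :=
  Nat.card {e : E // G.CrossAt c e}

/-- The number of total medial vertices of a valuation. -/
noncomputable def totCount {n : ℕ} (G : RibbonGraph E) (c : Flags E → Fin n) : ℕ :=
  Nat.card {e : E // G.TotalAt c e}

/-- A proper edge 3-colouring of `G`: edges meeting at a vertex get distinct colours. -/
def ProperEdge3Coloring (G : RibbonGraph E) (κ : E → Fin 3) : Prop :=
  ∀ e e' : E, e ≠ e' →
    (∃ p q : Bool × Bool, G.VertexConn (e, p) (e', q)) → κ e ≠ κ e'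

/-- The circuit partition polynomial `j(G_m^P ; x)` of the Penrose directed medial graph
of an oriented checkerboard coloured graph `G`: its states are exactly the Penrose states
of `G_m`, so `j(G_m^P ; x) = ∑_s x^{c(s)} = ∑_{A ⊆ E(G)} x^{f(G^{τ(A)})}`. -/
noncomputable def circuitPartitionMedial [Fintype E] [DecidableEq E] (G : RibbonGraph E) :
    Polynomial ℤ :=
  ∑ A ∈ (Finset.univ : Finset E).powerset, X ^ (G.petrial A).nFaces

/-- The faces of `G`, i.e. the vertices of the geometric dual `G*`. -/
def Face (G : RibbonGraph E) := Quot G.faceStep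

instance [Finite E] (G : RibbonGraph E) : Finite (Face G) :=
  Finite.of_surjective (Quot.mk _) (fun q => Quot.exists_rep q)

/-- The underlying simple graph of the geometric dual `G*`: vertices are the faces of `G`,
two distinct faces being adjacent when they share an edge. -/
def dualGraph (G : RibbonGraph E) : SimpleGraph (Face G) where
  Adj x y := x ≠ y ∧ ∃ g : Flags E, x = Quot.mk _ g ∧ y = Quot.mk _ (G.σ2 g)
  symm := by
    constructor
    rintro x y ⟨hxy, g, hx, hy⟩
    exact ⟨Ne.symm hxy, G.σ2 g, hy, by rw [σ2_σ2]; exact hx⟩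
  loopless := by constructor; rintro x ⟨h, -⟩; exact h rfl

/-- The chromatic polynomial of a finite simple graph, via Whitney's rank expansion:
`χ(H;λ) = ∑_{S ⊆ E(H)} (−1)^{|S|} λ^{c(S)}`, where `c(S)` is the number of connected
components of the spanning subgraph with edge set `S`. -/
noncomputable def chromPoly {V : Type} [Finite V] (H : SimpleGraph V) : Polynomial ℤ := by
  classical
  haveI := Fintype.ofFinite V
  exact ∑ S ∈ ((Finset.univ : Finset (Sym2 V)).filter (· ∈ H.edgeSet)).powerset,
    (-1 : Polynomial ℤ) ^ S.card * X ^ (Nat.card (Quot (fun x y : V => s(x, y) ∈ S)))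

/-- The chromatic polynomial `χ(G*; λ)` of the geometric dual of `G` (as a multigraph:
it is `0` when `G*` has a loop, i.e. when some edge of `G` has the same face on both of
its sides, and otherwise it is the chromatic polynomial of the underlying simple graph
of `G*`). -/
noncomputable def dualChrom [Finite E] (G : RibbonGraph E) : Polynomial ℤ := by
  classical
  exact if ∃ g : Flags E, Quot.mk G.faceStep (G.σ2 g) = Quot.mk G.faceStep g then 0
    else chromPoly G.dualGraph


/-! ### Auxiliary development for `stmt16` -/

open Module Finset

section KleinToolbox

lemma kz : ∀ p : Bool × Bool, kAdd (false, false) p = p := by decide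
lemma kz' : ∀ p : Bool × Bool, kAdd p (false, false) = p := by decide
lemma k_comm : ∀ p q : Bool × Bool, kAdd p q = kAdd q p := by decide
lemma k_pba : ∀ p a b : Bool × Bool, kAdd (kAdd p b) a = kAdd p (kAdd a b) := by decide
lemma k_aa : ∀ p : Bool × Bool, kAdd p p = (false, false) := by decide
lemma k_aba : ∀ a b : Bool × Bool, kAdd (kAdd a b) a = b := by decide
lemma k_abba : ∀ a b : Bool × Bool, kAdd (kAdd (kAdd a b) b) a = (false, false) := by decide
set_option synthInstance.maxSize 2000 in
set_option synthInstance.maxHeartbeats 1000000 in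
lemma kAdd_ne_self : ∀ p d : Bool × Bool, d ≠ (false, false) → kAdd p d ≠ p := by decide
set_option synthInstance.maxSize 2000 in
set_option synthInstance.maxHeartbeats 1000000 in
lemma rel_cases : ∀ a b p p' : Bool × Bool, a ≠ (false, false) → b ≠ (false, false) →
    a ≠ b → (p' = p ∨ p' = kAdd p a ∨ p' = kAdd p b ∨ p' = kAdd (kAdd p b) a) := by decide
set_option synthInstance.maxSize 2000 in
set_option synthInstance.maxHeartbeats 1000000 in
lemma four_cases : ∀ a b p : Bool × Bool, a ≠ (false, false) → b ≠ (false, false) →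
    a ≠ b → (p = (false, false) ∨ p = a ∨ p = b ∨ p = kAdd a b) := by decide
set_option synthInstance.maxSize 2000 in
set_option synthInstance.maxHeartbeats 1000000 in
lemma r_flip : ∀ d p : Bool × Bool, d ≠ (false, false) →
    (if d.1 then (kAdd p d).1 else (kAdd p d).2) = !(if d.1 then p.1 else p.2) := by decide

end KleinToolbox

section GenericCounting

variable {α : Type}

lemma z2 : ∀ a : ZMod 2, a + a = 0 := by decide
lemma z3 : ∀ u v w : ZMod 2, u + v = w → v = w + u := by decide
lemma z4 : ∀ u v w : ZMod 2, u + w = (u + v) + (v + w) := by decide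
lemma z5 : ∀ u v : ZMod 2, u + v = 0 → u = v := by decide

lemma eqvGen_invol {t : α → α} (ht : ∀ x, t (t x) = x) {x y : α}
    (h : Relation.EqvGen (fun u v => v = t u) x y) : y = x ∨ y = t x := by
  induction h with
  | rel a b hab => right; rw [hab]
  | refl a => left; rfl
  | symm a b _ ih =>
      rcases ih with h | h
      · left; exact h.symm
      · right; rw [h, ht]
  | trans a b c _ _ ih1 ih2 =>
      rcases ih1 with h1 | h1 <;> rcases ih2 with h2 | h2
      · left; rw [h2, h1]
      · right; rw [h2, h1]
      · right; rw [h2, h1]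
      · left; rw [h2, h1, ht]

lemma card_quot_invol [Fintype α] {t : α → α} (ht : ∀ x, t (t x) = x)
    (hne : ∀ x, t x ≠ x) :
    2 * Nat.card (Quot (fun u v => v = t u)) = Fintype.card α := by
  classical
  set r : α → α → Prop := fun u v => v = t u with hr
  haveI : Finite (Quot r) := Finite.of_surjective _ (Quot.mk_surjective (r := r))
  haveI := Fintype.ofFinite (Quot r)
  have key : ∀ q : Quot r, (univ.filter (fun x => Quot.mk r x = q)).card = 2 := by
    intro q
    obtain ⟨x₀, rfl⟩ := Quot.exists_rep q
    have : (univ.filter (fun x => Quot.mk r x = Quot.mk r x₀)) = {x₀, t x₀} := by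
      ext y
      simp only [mem_filter, mem_univ, true_and, mem_insert, mem_singleton, Quot.eq]
      constructor
      · intro h
        rcases eqvGen_invol ht h with h | h
        · left; rw [← h]
        · right; rw [h, ht]
      · rintro (rfl | rfl)
        · exact Relation.EqvGen.refl _
        · exact Relation.EqvGen.symm _ _ (Relation.EqvGen.rel _ _ rfl)
    rw [this, Finset.card_insert_of_notMem (by simp [(hne x₀).symm, Ne, eq_comm]),
      Finset.card_singleton]
  have := Finset.card_eq_sum_card_fiberwise
    (f := Quot.mk r) (s := (univ : Finset α)) (t := univ) (fun x _ => mem_univ _)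
  rw [card_univ] at this
  rw [Nat.card_eq_fintype_card, ← card_univ, this]
  rw [Finset.sum_congr rfl (fun q _ => key q), Finset.sum_const, card_univ, smul_eq_mul,
    mul_comm]

lemma card_const (r : α → α → Prop) [Fintype α] (k : ℕ) :
    Nat.card {c : α → Fin k // ∀ x y, r x y → c x = c y} = k ^ Nat.card (Quot r) := by
  haveI : Finite (Quot r) := Finite.of_surjective _ (Quot.mk_surjective (r := r))
  have e : {c : α → Fin k // ∀ x y, r x y → c x = c y} ≃ (Quot r → Fin k) :=
  { toFun := fun c => fun q => Quot.lift c.1 (fun x y hr => c.2 x y hr) q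
    invFun := fun g => ⟨fun x => g (Quot.mk r x), fun x y hr => by
      show g (Quot.mk r x) = g (Quot.mk r y); rw [Quot.sound hr]⟩
    left_inv := fun c => Subtype.ext rfl
    right_inv := fun g => funext fun q => Quot.inductionOn q (fun _ => rfl) }
  rw [Nat.card_congr e, Nat.card_fun, Nat.card_eq_fintype_card (α := Fin k), Fintype.card_fin]

lemma sum_eq_zero_of_invol {s : Finset α} (t : α → α) (hts : ∀ x ∈ s, t x ∈ s)
    (htt : ∀ x, t (t x) = x) (hne : ∀ x, t x ≠ x) (h : α → ZMod 2)
    (hh : ∀ x, h (t x) = h x) : ∑ x ∈ s, h x = 0 :=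
  Finset.sum_involution (fun a _ => t a) (fun a _ => by rw [hh]; exact z2 _)
    (fun a _ _ => hne a) (fun a ha => hts a ha) (fun a _ => htt a)

/-- The submodule of functions invariant along a relation. -/
def invSub (r : α → α → Prop) : Submodule (ZMod 2) (α → ZMod 2) where
  carrier := {h | ∀ x y, r x y → h x = h y}
  add_mem' := fun {f} {g} hf hg x y hr => by simp only [Pi.add_apply, hf x y hr, hg x y hr]
  zero_mem' := fun x y _ => rfl
  smul_mem' := fun c f hf x y hr => by simp only [Pi.smul_apply, hf x y hr]

lemma mem_invSub {r : α → α → Prop} {h : α → ZMod 2} :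
    h ∈ invSub r ↔ ∀ x y, r x y → h x = h y := Iff.rfl

/-- Invariant functions are the functions on the quotient. -/
def invSubEquiv (r : α → α → Prop) : ↥(invSub r) ≃ₗ[ZMod 2] (Quot r → ZMod 2) where
  toFun h := fun q => Quot.lift h.1 (fun x y hr => h.2 x y hr) q
  map_add' h g := funext fun q => Quot.inductionOn q (fun _ => rfl)
  map_smul' c h := funext fun q => Quot.inductionOn q (fun _ => rfl)
  invFun g := ⟨fun x => g (Quot.mk r x), fun x y hr => by
    show g (Quot.mk r x) = g (Quot.mk r y); rw [Quot.sound hr]⟩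
  left_inv h := Subtype.ext rfl
  right_inv g := funext fun q => Quot.inductionOn q (fun _ => rfl)

lemma finrank_invSub (r : α → α → Prop) [Fintype α] :
    finrank (ZMod 2) ↥(invSub r) = Nat.card (Quot r) := by
  haveI : Finite (Quot r) := Finite.of_surjective _ (Quot.mk_surjective (r := r))
  haveI := Fintype.ofFinite (Quot r)
  rw [(invSubEquiv r).finrank_eq, finrank_pi, Nat.card_eq_fintype_card]

/-- A product of submodules is equivalent to the product of the pieces. -/
def subProdEquiv {R M N : Type*} [CommRing R] [AddCommGroup M] [AddCommGroup N]
    [Module R M] [Module R N] (p : Submodule R M) (q : Submodule R N) :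
    ↥(p.prod q) ≃ₗ[R] (↥p × ↥q) where
  toFun x := (⟨x.1.1, x.2.1⟩, ⟨x.1.2, x.2.2⟩)
  map_add' x y := rfl
  map_smul' c x := rfl
  invFun z := ⟨(z.1.1, z.2.1), ⟨z.1.2, z.2.2⟩⟩
  left_inv x := rfl
  right_inv z := rfl

end GenericCounting

section Homology

open scoped Classical

lemma σ0_apply (G : RibbonGraph E) (e : E) (p : Bool × Bool) :
    G.σ0 (e, p) = (e, kAdd p (G.a e)) := rfl

lemma σ2_apply (G : RibbonGraph E) (e : E) (p : Bool × Bool) :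
    G.σ2 (e, p) = (e, kAdd p (G.b e)) := rfl

lemma sum_bb (v : Bool × Bool → ZMod 2) {d : Bool × Bool} (hd : d ≠ (false, false))
    (hv : ∀ p, v (kAdd p d) = v p) : ∑ p : Bool × Bool, v p = 0 :=
  sum_eq_zero_of_invol (fun p => kAdd p d) (fun x _ => mem_univ _)
    (fun p => kAdd_kAdd p d) (fun p => kAdd_ne_self p d hd) v hv

variable [Fintype E]

/-- The medial boundary map. -/
def bd1 : (Flags E → ZMod 2) →ₗ[ZMod 2] (E → ZMod 2) where
  toFun h := fun e => ∑ p : Bool × Bool, h (e, p)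
  map_add' h g := funext fun e => by simp [Finset.sum_add_distrib]
  map_smul' c h := funext fun e => by simp [Finset.mul_sum]

/-- Functions invariant under `s1` (functions on medial edges). -/
def C1sub (G : RibbonGraph E) : Submodule (ZMod 2) (Flags E → ZMod 2) :=
  invSub (fun x y => y = G.s1 x)

/-- The component of an edge. -/
def πe (G : RibbonGraph E) (e : E) : Quot G.compStep := Quot.mk _ (e, (false, false))

lemma edge_conn (G : RibbonGraph E) (e : E) (p p' : Bool × Bool) :
    Relation.EqvGen G.compStep (e, p) (e, p') := by
  rcases rel_cases (G.a e) (G.b e) p p' (G.a_ne e) (G.b_ne e) (G.ab_ne e) with h | h | h | h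
  · rw [h]; exact Relation.EqvGen.refl _
  · rw [h]; exact Relation.EqvGen.rel _ _ (Or.inl rfl)
  · rw [h]; exact Relation.EqvGen.rel _ _ (Or.inr (Or.inl rfl))
  · rw [h]
    exact Relation.EqvGen.trans _ _ _ (Relation.EqvGen.rel _ _ (Or.inr (Or.inl rfl)))
      (Relation.EqvGen.rel _ _ (Or.inl rfl))

lemma mk_flag (G : RibbonGraph E) (f : Flags E) : Quot.mk G.compStep f = πe G f.1 :=
  Quot.eq.mpr (edge_conn G f.1 f.2 (false, false))

/-- The component-sum map. -/
noncomputable def qmap (G : RibbonGraph E) :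
    (E → ZMod 2) →ₗ[ZMod 2] (Quot G.compStep → ZMod 2) where
  toFun ψ := fun cl => ∑ e ∈ univ.filter (fun e => πe G e = cl), ψ e
  map_add' ψ φ := funext fun cl => by simp [Finset.sum_add_distrib]
  map_smul' c ψ := funext fun cl => by simp [Finset.mul_sum]

lemma range_qmap (G : RibbonGraph E) : LinearMap.range (qmap G) = ⊤ := by
  haveI : Finite (Quot G.compStep) := Finite.of_surjective _ Quot.mk_surjective
  haveI := Fintype.ofFinite (Quot G.compStep)
  rw [eq_top_iff]
  rintro g -
  have hg : g = ∑ cl ∈ univ, g cl • (fun cl' => if cl = cl' then (1 : ZMod 2) else 0) := by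
    funext x
    rw [Finset.sum_apply]
    simp [mul_ite, Finset.sum_ite_eq']
  rw [hg]
  refine Submodule.sum_mem _ (fun cl _ => Submodule.smul_mem _ _ ?_)
  obtain ⟨f, hf⟩ := Quot.exists_rep cl
  refine ⟨fun e' => if e' = f.1 then 1 else 0, ?_⟩
  funext cl'
  show ∑ e ∈ univ.filter (fun e => πe G e = cl'), (if e = f.1 then (1:ZMod 2) else 0) = _
  have hπ : πe G f.1 = cl := by rw [← mk_flag, hf]
  rw [Finset.sum_ite_eq' (univ.filter (fun e => πe G e = cl')) f.1 (fun _ => (1:ZMod 2))]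
  simp only [mem_filter, mem_univ, true_and, hπ]

lemma range_bd1_le (G : RibbonGraph E) :
    LinearMap.range ((bd1 (E := E)).domRestrict (C1sub G)) ≤ LinearMap.ker (qmap G) := by
  rintro ψ ⟨⟨h, hh⟩, rfl⟩
  rw [LinearMap.mem_ker]
  funext cl
  show ∑ e ∈ univ.filter (fun e => πe G e = cl), (∑ p : Bool × Bool, h (e, p)) = 0
  have hprod : ∑ e ∈ univ.filter (fun e => πe G e = cl), ∑ p : Bool × Bool, h (e, p)
      = ∑ f ∈ (univ.filter (fun e => πe G e = cl)) ×ˢ (univ : Finset (Bool × Bool)), h f := by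
    rw [Finset.sum_product]
  rw [hprod]
  refine sum_eq_zero_of_invol G.s1 ?_ G.s1_invol G.s1_ne h (fun x => (hh x (G.s1 x) rfl).symm)
  intro f hf
  simp only [Finset.mem_product, mem_filter, mem_univ, true_and, and_true] at *
  have hstep : Quot.mk G.compStep (G.s1 f) = Quot.mk G.compStep f :=
    (Quot.sound (show G.compStep f (G.s1 f) from Or.inr (Or.inr rfl))).symm
  rw [← mk_flag, hstep, mk_flag]
  exact hf

lemma sum_ite_flag (f : Flags E) (e : E) :
    ∑ p : Bool × Bool, (if (e, p) = f then (1 : ZMod 2) else 0) = if e = f.1 then 1 else 0 := by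
  obtain ⟨e', p'⟩ := f
  by_cases he : e = e'
  · subst he
    rw [show (fun p : Bool × Bool => if (e, p) = (e, p') then (1:ZMod 2) else 0)
        = fun p => if p = p' then 1 else 0 from funext fun p => by simp]
    simp [Finset.sum_ite_eq']
  · simp [Prod.ext_iff, he]

lemma dd_mem (G : RibbonGraph E) (f g : Flags E) (hfg : Relation.EqvGen G.compStep f g) :
    (fun x => (if x = f.1 then (1 : ZMod 2) else 0) + (if x = g.1 then 1 else 0))
      ∈ LinearMap.range ((bd1 (E := E)).domRestrict (C1sub G)) := by
  induction hfg with
  | rel f g hfg =>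
      have hzero : ∀ e : E,
          (fun x => (if x = e then (1 : ZMod 2) else 0) + (if x = e then 1 else 0)) = 0 :=
        fun e => funext fun x => z2 _
      rcases hfg with h | h | h
      · have h1 : g.1 = f.1 := by rw [h]; rfl
        rw [h1, hzero]; exact Submodule.zero_mem _
      · have h1 : g.1 = f.1 := by rw [h]; rfl
        rw [h1, hzero]; exact Submodule.zero_mem _
      · subst h
        refine ⟨⟨fun x => if x = f ∨ x = G.s1 f then 1 else 0, ?_⟩, ?_⟩
        · intro x y hxy
          subst hxy
          have h1 : (G.s1 x = f) ↔ (x = G.s1 f) := by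
            constructor
            · intro h; rw [← h, G.s1_invol]
            · intro h; rw [h, G.s1_invol]
          have h2 : (G.s1 x = G.s1 f) ↔ (x = f) := by
            constructor
            · intro h
              have := congrArg G.s1 h
              rwa [G.s1_invol, G.s1_invol] at this
            · intro h; rw [h]
          show _ = (if G.s1 x = f ∨ G.s1 x = G.s1 f then (1 : ZMod 2) else 0)
          have hcond : (G.s1 x = f ∨ G.s1 x = G.s1 f) ↔ (x = f ∨ x = G.s1 f) := by
            rw [h1, h2, or_comm]
          exact (if_congr hcond rfl rfl).symm
        · funext e
          show ∑ p : Bool × Bool, (if (e, p) = f ∨ (e, p) = G.s1 f then (1:ZMod 2) else 0) = _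
          have hsplit : ∀ p : Bool × Bool,
              (if (e, p) = f ∨ (e, p) = G.s1 f then (1:ZMod 2) else 0)
              = (if (e, p) = f then (1:ZMod 2) else 0)
                + (if (e, p) = G.s1 f then 1 else 0) := by
            intro p
            by_cases h1 : (e,p) = f
            · have h2 : ¬ ((e,p) = G.s1 f) := fun h2 => G.s1_ne f (by rw [← h2, h1])
              simp [h1, h2, Ne.symm (G.s1_ne f)]
            · by_cases h2 : (e,p) = G.s1 f <;> simp [h1, h2, G.s1_ne f]
          rw [Finset.sum_congr rfl (fun p _ => hsplit p), Finset.sum_add_distrib,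
            sum_ite_flag, sum_ite_flag]
  | refl f =>
      have : (fun x => (if x = f.1 then (1 : ZMod 2) else 0) + (if x = f.1 then 1 else 0)) = 0 :=
        funext fun x => z2 _
      rw [this]; exact Submodule.zero_mem _
  | symm f g _ ih =>
      have : (fun x => (if x = g.1 then (1 : ZMod 2) else 0) + (if x = f.1 then 1 else 0))
          = (fun x => (if x = f.1 then (1 : ZMod 2) else 0) + (if x = g.1 then 1 else 0)) :=
        funext fun x => add_comm _ _
      rw [this]; exact ih
  | trans f g h _ _ ih1 ih2 =>
      have hadd := Submodule.add_mem _ ih1 ih2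
      have heq : (fun x => (if x = f.1 then (1:ZMod 2) else 0) + (if x = h.1 then 1 else 0))
          = ((fun x => (if x = f.1 then (1:ZMod 2) else 0) + (if x = g.1 then 1 else 0))
            + fun x => (if x = g.1 then (1:ZMod 2) else 0) + (if x = h.1 then 1 else 0)) := by
        funext x
        show _ = ((if x = f.1 then (1:ZMod 2) else 0) + (if x = g.1 then 1 else 0))
            + ((if x = g.1 then (1:ZMod 2) else 0) + (if x = h.1 then 1 else 0))
        exact z4 _ _ _
      rw [heq]; exact hadd

lemma ker_qmap_le (G : RibbonGraph E) :
    LinearMap.ker (qmap G) ≤ LinearMap.range ((bd1 (E := E)).domRestrict (C1sub G)) := by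
  intro ψ hψ
  set base : Quot G.compStep → E := fun cl => (Quot.exists_rep cl).choose.1 with hbasedef
  have hbase : ∀ cl, πe G (base cl) = cl := fun cl => by
    rw [← mk_flag]
    exact (Quot.exists_rep cl).choose_spec
  have hmem : ∀ e : E,
      (fun x => (if x = e then (1:ZMod 2) else 0) + (if x = base (πe G e) then 1 else 0))
        ∈ LinearMap.range ((bd1 (E := E)).domRestrict (C1sub G)) := by
    intro e
    refine dd_mem G (e, (false,false)) (base (πe G e), (false,false)) ?_
    rw [← Quot.eq]
    show Quot.mk _ _ = Quot.mk _ _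
    rw [mk_flag, mk_flag]
    exact (hbase (πe G e)).symm
  have hrep : ψ = ∑ e ∈ univ, ψ e •
      (fun x => (if x = e then (1:ZMod 2) else 0) + (if x = base (πe G e) then 1 else 0)) := by
    funext x
    rw [Finset.sum_apply]
    have hterm : ∀ e ∈ univ, (ψ e • (fun x => (if x = e then (1:ZMod 2) else 0)
          + (if x = base (πe G e) then 1 else 0))) x
        = ψ e * (if x = e then 1 else 0) + ψ e * (if x = base (πe G e) then 1 else 0) :=
      fun e _ => by simp [mul_add]
    rw [Finset.sum_congr rfl hterm, Finset.sum_add_distrib]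
    have h1 : ∑ e ∈ univ, ψ e * (if x = e then (1:ZMod 2) else 0) = ψ x := by
      simp [mul_ite, Finset.sum_ite_eq]
    have h2 : ∑ e ∈ univ, ψ e * (if x = base (πe G e) then (1:ZMod 2) else 0) = 0 := by
      have hterm2 : ∀ e ∈ univ, ψ e * (if x = base (πe G e) then (1:ZMod 2) else 0)
          = if x = base (πe G e) then ψ e else 0 :=
        fun e _ => by rw [mul_ite, mul_one, mul_zero]
      rw [Finset.sum_congr rfl hterm2, ← Finset.sum_filter]
      by_cases hx : ∃ e0 : E, x = base (πe G e0)
      · obtain ⟨e0, he0⟩ := hx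
        have hfeq : univ.filter (fun e => x = base (πe G e))
            = univ.filter (fun e => πe G e = πe G e0) := by
          ext e
          simp only [mem_filter, mem_univ, true_and]
          constructor
          · intro h
            rw [← hbase (πe G e), ← h, he0, hbase]
          · intro h
            rw [h, ← he0]
        rw [hfeq]
        exact congrFun (LinearMap.mem_ker.mp hψ) (πe G e0)
      · push_neg at hx
        rw [Finset.filter_false_of_mem (fun e _ => hx e), Finset.sum_empty]
    rw [h1, h2, add_zero]
  rw [hrep]
  exact Submodule.sum_mem _ (fun e _ => Submodule.smul_mem _ _ (hmem e))

lemma range_bd1_eq (G : RibbonGraph E) :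
    LinearMap.range ((bd1 (E := E)).domRestrict (C1sub G)) = LinearMap.ker (qmap G) :=
  le_antisymm (range_bd1_le G) (ker_qmap_le G)

lemma finrank_C1 (G : RibbonGraph E) :
    finrank (ZMod 2) ↥(C1sub G) = 2 * Fintype.card E := by
  rw [C1sub, finrank_invSub]
  have h1 := card_quot_invol (t := G.s1) G.s1_invol G.s1_ne
  have hc : Fintype.card (Flags E) = 4 * Fintype.card E := by
    simp only [Flags, Fintype.card_prod, Fintype.card_bool]
    ring
  omega

lemma comp_to_vert (G : RibbonGraph E) : invSub G.compStep ≤ invSub G.vertStep :=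
  fun μ hμ x y hxy => hμ x y (by
    rcases hxy with h | h
    exacts [Or.inr (Or.inl h), Or.inr (Or.inr h)])

lemma comp_to_face (G : RibbonGraph E) : invSub G.compStep ≤ invSub G.faceStep :=
  fun μ hμ x y hxy => hμ x y (by
    rcases hxy with h | h
    exacts [Or.inl h, Or.inr (Or.inr h)])

lemma cycle_is_boundary (G : RibbonGraph E)
    (heuler : G.nVerts + G.nFaces = G.nEdges + 2 * G.nComps)
    (h : Flags E → ZMod 2) (h1 : ∀ f, h (G.s1 f) = h f)
    (h2 : ∀ e : E, ∑ p : Bool × Bool, h (e, p) = 0) :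
    ∃ μV μF : Flags E → ZMod 2, μV ∈ invSub G.vertStep ∧ μF ∈ invSub G.faceStep ∧
      μV + μF = h := by
  set Φ : ((Flags E → ZMod 2) × (Flags E → ZMod 2)) →ₗ[ZMod 2] (Flags E → ZMod 2) :=
    LinearMap.coprod LinearMap.id LinearMap.id with hΦ
  set S := (invSub G.vertStep).prod (invSub G.faceStep) with hS
  set B := Submodule.map Φ S with hB
  set Z := C1sub G ⊓ LinearMap.ker (bd1 (E := E)) with hZ
  have hBZ : B ≤ Z := by
    rintro x ⟨⟨μV, μF⟩, hmem, rfl⟩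
    obtain ⟨hV, hF⟩ := hmem
    refine Submodule.mem_inf.mpr ⟨?_, ?_⟩
    · intro u v huv
      subst huv
      show (μV + μF) u = (μV + μF) (G.s1 u)
      simp only [Pi.add_apply]
      have aV : μV u = μV (G.s1 u) := hV u (G.s1 u) (Or.inr rfl)
      have aF : μF u = μF (G.s1 u) := hF u (G.s1 u) (Or.inr rfl)
      rw [aV, aF]
    · rw [LinearMap.mem_ker]
      funext e
      show ∑ p : Bool × Bool, (μV + μF) (e, p) = 0
      have hterm : ∀ p ∈ (univ : Finset (Bool × Bool)),
          (μV + μF) (e, p) = μV (e,p) + μF (e,p) := fun p _ => rfl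
      rw [Finset.sum_congr rfl hterm, Finset.sum_add_distrib]
      have hμV : ∀ p, μV (e, kAdd p (G.b e)) = μV (e, p) := by
        intro p
        have hinv : μV (e, p) = μV (G.σ2 (e, p)) := hV (e, p) (G.σ2 (e, p)) (Or.inl rfl)
        rw [σ2_apply] at hinv
        exact hinv.symm
      have hμF : ∀ p, μF (e, kAdd p (G.a e)) = μF (e, p) := by
        intro p
        have hinv : μF (e, p) = μF (G.σ0 (e, p)) := hF (e, p) (G.σ0 (e, p)) (Or.inl rfl)
        rw [σ0_apply] at hinv
        exact hinv.symm
      rw [sum_bb _ (G.b_ne e) hμV, sum_bb _ (G.a_ne e) hμF, add_zero]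
  haveI : Finite (Quot G.compStep) := Finite.of_surjective _ Quot.mk_surjective
  haveI := Fintype.ofFinite (Quot G.compStep)
  have hrankq : finrank (ZMod 2) ↥(LinearMap.range (qmap G)) = G.nComps := by
    rw [range_qmap, finrank_top, finrank_pi]
    rw [nComps, Nat.card_eq_fintype_card]
  have hkerq : finrank (ZMod 2) ↥(LinearMap.ker (qmap G)) + G.nComps = Fintype.card E := by
    have hrn := LinearMap.finrank_range_add_finrank_ker (qmap G)
    rw [hrankq, finrank_pi] at hrn
    omega
  have hD1 := LinearMap.finrank_range_add_finrank_ker ((bd1 (E := E)).domRestrict (C1sub G))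
  rw [range_bd1_eq, finrank_C1] at hD1
  have hkerD1_Z : finrank (ZMod 2) ↥(LinearMap.ker ((bd1 (E := E)).domRestrict (C1sub G)))
      = finrank (ZMod 2) ↥Z := by
    rw [LinearMap.ker_domRestrict]
    have e1 : Submodule.comap (C1sub G).subtype (LinearMap.ker (bd1 (E := E)))
        = Submodule.comap (C1sub G).subtype (C1sub G ⊓ LinearMap.ker (bd1 (E := E))) := by
      rw [Submodule.comap_inf, Submodule.comap_subtype_self, top_inf_eq]
    rw [e1, hZ]
    exact (Submodule.comapSubtypeEquivOfLe inf_le_left).finrank_eq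
  have hfS : finrank (ZMod 2) ↥S = G.nVerts + G.nFaces := by
    rw [hS, (subProdEquiv _ _).finrank_eq, Module.finrank_prod, finrank_invSub, finrank_invSub]
    rfl
  have hkerΦ : finrank (ZMod 2) ↥(LinearMap.ker (Φ.domRestrict S)) = G.nComps := by
    have keyeq : ∀ x : ↥(LinearMap.ker (Φ.domRestrict S)),
        x.1.1.1 = x.1.1.2 := by
      intro x
      have hx := x.2
      rw [LinearMap.mem_ker] at hx
      funext u
      exact z5 _ _ (congrFun hx u)
    have hVmem : ∀ x : ↥(LinearMap.ker (Φ.domRestrict S)),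
        x.1.1.1 ∈ invSub G.compStep := by
      intro x
      obtain ⟨hV, hF⟩ := x.1.2
      intro u v huv
      rcases huv with hh | hh | hh
      · have := keyeq x
        rw [this]
        exact hF u v (Or.inl hh)
      · exact hV u v (Or.inl hh)
      · exact hV u v (Or.inr hh)
    have eqv : ↥(LinearMap.ker (Φ.domRestrict S)) ≃ₗ[ZMod 2] ↥(invSub G.compStep) :=
    { toFun := fun x => ⟨x.1.1.1, hVmem x⟩
      map_add' := fun x y => rfl
      map_smul' := fun c x => rfl
      invFun := fun μ => ⟨⟨(μ.1, μ.1), by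
          rw [hS]
          exact Submodule.mem_prod.mpr ⟨comp_to_vert G μ.2, comp_to_face G μ.2⟩⟩, by
          rw [LinearMap.mem_ker]
          funext u
          exact z2 _⟩
      left_inv := fun x => by
        apply Subtype.ext
        apply Subtype.ext
        exact Prod.ext rfl (keyeq x)
      right_inv := fun μ => Subtype.ext rfl }
    rw [eqv.finrank_eq, finrank_invSub]
    rfl
  have hrB : LinearMap.range (Φ.domRestrict S) = B := by
    rw [LinearMap.range_domRestrict]
  have hfinB : finrank (ZMod 2) ↥B + G.nComps = G.nVerts + G.nFaces := by
    have hrn := LinearMap.finrank_range_add_finrank_ker (Φ.domRestrict S)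
    rw [hrB, hkerΦ, hfS] at hrn
    exact hrn
  have hE : G.nEdges = Fintype.card E := by
    rw [nEdges, Nat.card_eq_fintype_card]
  have hZB : B = Z := by
    apply Submodule.eq_of_le_of_finrank_le hBZ
    omega
  have hhZ : h ∈ Z := by
    rw [hZ]
    refine Submodule.mem_inf.mpr ⟨?_, ?_⟩
    · intro x y hxy
      subst hxy
      exact (h1 x).symm
    · rw [LinearMap.mem_ker]
      funext e
      exact h2 e
  rw [← hZB] at hhZ
  obtain ⟨⟨μV, μF⟩, hmem, heq⟩ := hhZ
  exact ⟨μV, μF, hmem.1, hmem.2, heq⟩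

end Homology

section Colour

variable {k : ℕ}

lemma σ02_apply (G : RibbonGraph E) (e : E) (p : Bool × Bool) :
    G.σ0 (G.σ2 (e, p)) = (e, kAdd (kAdd p (G.b e)) (G.a e)) := rfl

lemma k_a_ab : ∀ a b : Bool × Bool, kAdd a (kAdd a b) = b := by decide
lemma k_b_ab : ∀ a b : Bool × Bool, kAdd b (kAdd a b) = a := by decide

/-- The white pair condition. -/
def Wc (G : RibbonGraph E) (c : Flags E → Fin k) (e : E) : Prop :=
  ∀ p : Bool × Bool, c (G.σ0 (e, p)) = c (e, p)

/-- The crossing pair condition. -/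
def Cc (G : RibbonGraph E) (c : Flags E → Fin k) (e : E) : Prop :=
  ∀ p : Bool × Bool, c (G.σ0 (G.σ2 (e, p))) = c (e, p)

lemma cross_vals (G : RibbonGraph E) (c : Flags E → Fin k) (e : E) (hC : Cc G c e) :
    c (e, G.a e) = c (e, G.b e) ∧ c (e, kAdd (G.a e) (G.b e)) = c (e, (false, false)) := by
  constructor
  · have h1 := hC (G.b e)
    rw [σ02_apply, k_aa, kz] at h1
    exact h1
  · have h2 := hC (false, false)
    rw [σ02_apply, kz, k_comm (G.b e) (G.a e)] at h2
    exact h2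

lemma whiteAt_iff (G : RibbonGraph E) (c : Flags E → Fin k) (e : E) :
    G.WhiteAt c e ↔ (Wc G c e ∧ ¬ Cc G c e) := by
  constructor
  · rintro ⟨hW, hne⟩
    refine ⟨hW, fun hC => hne ?_⟩
    rw [σ2_apply, kz]
    have h1 : c (e, kAdd (G.b e) (G.a e)) = c (e, G.b e) := by
      have hh := hW (G.b e); rwa [σ0_apply] at hh
    have h2 : c (e, kAdd (G.b e) (G.a e)) = c (e, (false, false)) := by
      have hh := hC (false, false); rwa [σ02_apply, kz] at hh
    rw [← h2, h1]
  · rintro ⟨hW, hnC⟩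
    refine ⟨hW, ?_⟩
    rw [σ2_apply, kz]
    rw [Cc] at hnC
    push_neg at hnC
    obtain ⟨p, hp⟩ := hnC
    rw [σ02_apply] at hp
    have w0 : c (e, G.a e) = c (e, (false, false)) := by
      have hh := hW (false, false); rwa [σ0_apply, kz] at hh
    have wb : c (e, kAdd (G.b e) (G.a e)) = c (e, G.b e) := by
      have hh := hW (G.b e); rwa [σ0_apply] at hh
    have wab : c (e, kAdd (G.a e) (G.b e)) = c (e, G.b e) := by
      rw [← k_comm (G.b e) (G.a e)]; exact wb
    rcases four_cases (G.a e) (G.b e) p (G.a_ne e) (G.b_ne e) (G.ab_ne e) with h | h | h | h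
    · subst h
      rw [kz, wb] at hp
      exact Ne.symm hp
    · subst h
      rw [k_aba, w0] at hp
      exact Ne.symm hp
    · subst h
      rw [k_aa, kz, w0] at hp
      exact hp
    · subst h
      rw [k_abba] at hp
      intro hq
      exact hp (by rw [hq, wab])

lemma crossAt_iff (G : RibbonGraph E) (c : Flags E → Fin k) (e : E) :
    G.CrossAt c e ↔ (Cc G c e ∧ ¬ Wc G c e) := by
  constructor
  · rintro ⟨hC, hne⟩
    refine ⟨hC, fun hW => hne ?_⟩
    rw [σ0_apply, kz]
    have w0 : c (e, G.a e) = c (e, (false, false)) := by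
      have hh := hW (false, false); rwa [σ0_apply, kz] at hh
    exact w0.symm
  · rintro ⟨hC, hnW⟩
    refine ⟨hC, ?_⟩
    rw [σ0_apply, kz]
    obtain ⟨tab1, tab2⟩ := cross_vals G c e hC
    rw [Wc] at hnW
    push_neg at hnW
    obtain ⟨p, hp⟩ := hnW
    rw [σ0_apply] at hp
    rcases four_cases (G.a e) (G.b e) p (G.a_ne e) (G.b_ne e) (G.ab_ne e) with h | h | h | h
    · subst h
      rw [kz] at hp
      exact Ne.symm hp
    · subst h
      rw [k_aa] at hp
      exact hp
    · subst h
      rw [k_comm (G.b e) (G.a e), tab2] at hp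
      rw [← tab1] at hp
      exact hp
    · subst h
      rw [k_aba] at hp
      intro hq
      exact hp (by rw [← tab1, ← hq, ← tab2])

lemma sum_indicator_even (G : RibbonGraph E) (c : Flags E → Fin k)
    (hWC : ∀ e, G.WhiteAt c e ∨ G.CrossAt c e) (i : Fin k) (e : E) :
    ∑ p : Bool × Bool, (if c (e, p) = i then (1 : ZMod 2) else 0) = 0 := by
  rcases hWC e with hW | hC
  · refine sum_bb _ (G.a_ne e) ?_
    intro p
    have hh := hW.1 p
    rw [σ0_apply] at hh
    rw [hh]
  · refine sum_bb _ (fun h0 => (G.ab_ne e) ((kAdd_eq_zero_iff _ _).mp h0)) ?_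
    intro p
    have hh := hC.1 p
    rw [σ02_apply, k_pba] at hh
    rw [hh]

lemma cross_sym2 (G : RibbonGraph E) (c : Flags E → Fin k) (e : E) (hC : Cc G c e)
    (p : Bool × Bool) :
    s(c (e, p), c (G.σ2 (e, p)))
      = s(c (e, (false, false)), c (G.σ2 (e, (false, false)))) := by
  obtain ⟨tab1, tab2⟩ := cross_vals G c e hC
  rw [σ2_apply, σ2_apply, kz]
  rcases four_cases (G.a e) (G.b e) p (G.a_ne e) (G.b_ne e) (G.ab_ne e) with h | h | h | h
  · subst h
    rw [kz]
  · subst h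
    rw [tab1, tab2]
    exact Sym2.eq_swap
  · subst h
    rw [k_aa]
    exact Sym2.eq_swap
  · subst h
    rw [kAdd_kAdd, tab2, tab1]

end Colour

section Parity

open scoped Classical

variable {k : ℕ} [Fintype E]

lemma zcomb : ∀ u v : ZMod 2, (0 + u) + (v + u) = v := by decide

omit [Fintype E] in
lemma cross_unique (G : RibbonGraph E) (c : Flags E → Fin k) (e : E)
    (hcr : G.CrossAt c e) (p p' : Bool × Bool) (hpp : c (e, p) = c (e, p')) :
    p' = p ∨ p' = kAdd p (kAdd (G.a e) (G.b e)) := by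
  obtain ⟨hC, hne⟩ := hcr
  obtain ⟨tab1, tab2⟩ := cross_vals G c e hC
  rw [σ0_apply, kz] at hne
  rcases four_cases (G.a e) (G.b e) p (G.a_ne e) (G.b_ne e) (G.ab_ne e) with h | h | h | h <;>
    rcases four_cases (G.a e) (G.b e) p' (G.a_ne e) (G.b_ne e) (G.ab_ne e) with h' | h' | h' | h' <;>
    subst h <;> subst h'
  · left; rfl
  · exact absurd hpp hne
  · exact absurd (hpp.trans tab1.symm) hne
  · right; rw [kz]
  · exact absurd hpp.symm hne
  · left; rfl
  · right; rw [k_a_ab]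
  · exact absurd (hpp.trans tab2).symm hne
  · exact absurd (tab1.trans hpp).symm hne
  · right; rw [k_b_ab]
  · left; rfl
  · exact absurd ((tab1.trans hpp).trans tab2).symm hne
  · right; rw [k_aa]
  · exact absurd (tab2.symm.trans hpp) hne
  · exact absurd ((tab2.symm.trans hpp).trans tab1.symm) hne
  · left; rfl

omit [Fintype E] in
lemma cross_ne (G : RibbonGraph E) (c : Flags E → Fin k) (e : E) (hcr : G.CrossAt c e) :
    c (e, (false, false)) ≠ c (G.σ2 (e, (false, false))) := by
  obtain ⟨hC, hne⟩ := hcr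
  obtain ⟨tab1, tab2⟩ := cross_vals G c e hC
  rw [σ0_apply, kz] at hne
  rw [σ2_apply, kz]
  intro hq
  exact hne (by rw [hq, ← tab1])

lemma cross_pair_even (G : RibbonGraph E)
    (heuler : G.nVerts + G.nFaces = G.nEdges + 2 * G.nComps)
    (c : Flags E → Fin k) (hadm : G.Admissible c) (i j : Fin k) (hij : i ≠ j) :
    Even ((univ.filter (fun e => G.CrossAt c e ∧
      s(c (e, (false, false)), c (G.σ2 (e, (false, false)))) = s(i, j))).card) := by
  obtain ⟨μV, μF, hμV, hμF, hsum⟩ := cycle_is_boundary G heuler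
    (fun f => if c f = i then 1 else 0)
    (fun f => by
      show (if c (G.s1 f) = i then (1:ZMod 2) else 0) = (if c f = i then (1:ZMod 2) else 0)
      rw [hadm.1 f])
    (fun e => sum_indicator_even G c hadm.2 i e)
  have hμF1 : ∀ f, μF (G.s1 f) = μF f := fun f => (hμF f (G.s1 f) (Or.inr rfl)).symm
  have hμF0 : ∀ f, μF (G.σ0 f) = μF f := fun f => (hμF f (G.σ0 f) (Or.inl rfl)).symm
  have hμV2 : ∀ f, μV (G.σ2 f) = μV f := fun f => (hμV f (G.σ2 f) (Or.inl rfl)).symm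
  have hval : ∀ f, μV f + μF f = (if c f = i then (1:ZMod 2) else 0) := fun f => congrFun hsum f
  set d : E → Bool × Bool := fun e => if G.CrossAt c e then kAdd (G.a e) (G.b e) else G.a e
    with hd
  have hdcr : ∀ e, G.CrossAt c e → d e = kAdd (G.a e) (G.b e) := fun e h => if_pos h
  have hdnc : ∀ e, ¬ G.CrossAt c e → d e = G.a e := fun e h => if_neg h
  have hdne : ∀ e, d e ≠ (false, false) := by
    intro e
    by_cases hcr : G.CrossAt c e
    · rw [hdcr e hcr]
      exact fun h0 => (G.ab_ne e) ((kAdd_eq_zero_iff _ _).mp h0)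
    · rw [hdnc e hcr]
      exact G.a_ne e
  set t : Flags E → Flags E := fun f => (f.1, kAdd f.2 (d f.1)) with ht
  have htt : ∀ f, t (t f) = f := by
    intro f
    show (f.1, kAdd (kAdd f.2 (d f.1)) (d f.1)) = f
    rw [kAdd_kAdd]
  have hcol : ∀ f, c (t f) = c f := by
    intro f
    obtain ⟨e, p⟩ := f
    show c (e, kAdd p (d e)) = c (e, p)
    by_cases hcr : G.CrossAt c e
    · rw [hdcr e hcr, ← k_pba]
      have hh := hcr.1 p
      rwa [σ02_apply] at hh
    · rw [hdnc e hcr]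
      have hW : G.WhiteAt c e := (hadm.2 e).resolve_right hcr
      have hh := hW.1 p
      rwa [σ0_apply] at hh
  set r : Flags E → Bool := fun f => if (d f.1).1 then f.2.1 else f.2.2 with hr
  have hrt : ∀ f, r (t f) = ! r f := fun f => r_flip (d f.1) f.2 (hdne f.1)
  have hS0 : ∑ f ∈ univ.filter (fun f : Flags E => c f = j), μF f = 0 := by
    refine sum_eq_zero_of_invol G.s1 ?_ G.s1_invol G.s1_ne μF hμF1
    intro f hf
    rw [mem_filter] at hf ⊢
    exact ⟨mem_univ _, by rw [hadm.1 f]; exact hf.2⟩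
  have hreindex : ∑ f ∈ (univ.filter (fun f : Flags E => c f = j)).filter (fun f => ¬ (r f = true)), μF f
      = ∑ f ∈ (univ.filter (fun f : Flags E => c f = j)).filter (fun f => r f = true), μF (t f) := by
    refine Finset.sum_bij' (fun f _ => t f) (fun f _ => t f) ?_ ?_ ?_ ?_ ?_
    · intro a ha
      rw [mem_filter] at ha
      obtain ⟨ha1, ha2⟩ := ha
      rw [mem_filter] at ha1
      show t a ∈ (univ.filter (fun f : Flags E => c f = j)).filter (fun f => r f = true)
      rw [mem_filter, mem_filter]
      refine ⟨⟨mem_univ _, by rw [hcol]; exact ha1.2⟩, ?_⟩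
      rw [hrt]
      simp only [Bool.not_eq_true] at ha2
      rw [ha2]
      rfl
    · intro a ha
      rw [mem_filter] at ha
      obtain ⟨ha1, ha2⟩ := ha
      rw [mem_filter] at ha1
      show t a ∈ (univ.filter (fun f : Flags E => c f = j)).filter (fun f => ¬ (r f = true))
      rw [mem_filter, mem_filter]
      refine ⟨⟨mem_univ _, by rw [hcol]; exact ha1.2⟩, ?_⟩
      rw [hrt, ha2]
      simp
    · intro a _; exact htt a
    · intro a _; exact htt a
    · intro a _
      rw [htt]
  have hmain : ∑ f ∈ (univ.filter (fun f : Flags E => c f = j)).filter (fun f => r f = true), (μF f + μF (t f)) = 0 := by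
    rw [Finset.sum_add_distrib, ← hreindex, Finset.sum_filter_add_sum_filter_not, hS0]
  have hterm : ∀ f ∈ (univ.filter (fun f : Flags E => c f = j)).filter (fun f => r f = true),
      μF f + μF (t f) = (if G.CrossAt c f.1 ∧ c (G.σ2 f) = i then (1 : ZMod 2) else 0) := by
    intro f hf
    rw [mem_filter, mem_filter] at hf
    have hcf : c f = j := hf.1.2
    by_cases hcr : G.CrossAt c f.1
    · have htf : t f = G.σ0 (G.σ2 f) := by
        show (f.1, kAdd f.2 (d f.1)) = _
        obtain ⟨e, p⟩ := f
        rw [σ02_apply, hdcr e hcr, k_pba]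
      have e1 : μF f = (if c f = i then (1:ZMod 2) else 0) + μV f := z3 _ _ _ (hval f)
      have e2 : μF (G.σ2 f) = (if c (G.σ2 f) = i then (1:ZMod 2) else 0) + μV (G.σ2 f) :=
        z3 _ _ _ (hval (G.σ2 f))
      rw [htf, hμF0, e1, e2, hμV2]
      rw [if_neg (show ¬ c f = i by rw [hcf]; exact fun hq => hij hq.symm)]
      rw [if_congr (and_iff_right hcr) (rfl : (1:ZMod 2) = 1) rfl]
      exact zcomb _ _
    · have htf : t f = G.σ0 f := by
        show (f.1, kAdd f.2 (d f.1)) = _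
        obtain ⟨e, p⟩ := f
        rw [σ0_apply, hdnc e hcr]
      rw [htf, hμF0, if_neg (fun hq => hcr hq.1)]
      exact z2 _
  set Bset := ((univ.filter (fun f : Flags E => c f = j)).filter (fun f => r f = true)).filter
      (fun f => G.CrossAt c f.1 ∧ c (G.σ2 f) = i) with hBset
  have hBcard : ((Bset.card : ZMod 2)) = 0 := by
    rw [hBset, ← Finset.sum_boole, ← Finset.sum_congr rfl hterm, hmain]
  have hBeven : Even Bset.card := by
    rwa [ZMod.natCast_eq_zero_iff, ← even_iff_two_dvd] at hBcard
  have hbij : Bset.card = (univ.filter (fun e => G.CrossAt c e ∧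
      s(c (e, (false, false)), c (G.σ2 (e, (false, false)))) = s(i, j))).card := by
    refine Finset.card_bij (fun f _ => f.1) ?_ ?_ ?_
    · intro f hf
      obtain ⟨e, p⟩ := f
      rw [hBset, mem_filter, mem_filter, mem_filter] at hf
      obtain ⟨⟨⟨-, hcj⟩, hrf⟩, hcr, hσ2⟩ := hf
      rw [mem_filter]
      refine ⟨mem_univ _, hcr, ?_⟩
      have hsym := cross_sym2 G c e hcr.1 p
      rw [← hsym, hcj, hσ2]
      exact Sym2.eq_swap
    · intro f1 hf1 f2 hf2 heq
      obtain ⟨e1, p1⟩ := f1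
      obtain ⟨e2, p2⟩ := f2
      simp only at heq
      subst heq
      rw [hBset, mem_filter, mem_filter, mem_filter] at hf1 hf2
      obtain ⟨⟨⟨-, hcj1⟩, hr1⟩, hcr, -⟩ := hf1
      obtain ⟨⟨⟨-, hcj2⟩, hr2⟩, -, -⟩ := hf2
      rcases cross_unique G c e1 hcr p1 p2 (hcj1.trans hcj2.symm) with h | h
      · rw [h]
      · exfalso
        have htp : t (e1, p1) = (e1, p2) := by
          show (e1, kAdd p1 (d e1)) = (e1, p2)
          rw [hdcr e1 hcr, ← h]
        have hrr := hrt (e1, p1)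
        rw [htp, hr1, hr2] at hrr
        exact absurd hrr (by decide)
    · intro e he
      rw [mem_filter] at he
      obtain ⟨-, hcr, hpair⟩ := he
      obtain ⟨tab1, tab2⟩ := cross_vals G c e hcr.1
      have hσ2v : G.σ2 (e, (false, false)) = (e, G.b e) := by rw [σ2_apply, kz]
      rw [hσ2v, Sym2.eq_iff] at hpair
      have hmemof : ∀ p : Bool × Bool, c (e, p) = j → r (e, p) = true →
          c (G.σ2 (e, p)) = i → ∃ f, ∃ (hf : f ∈ Bset), f.1 = e := by
        intro p h1 h2 h3
        refine ⟨(e, p), ?_, rfl⟩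
        rw [hBset, mem_filter, mem_filter, mem_filter]
        exact ⟨⟨⟨mem_univ _, h1⟩, h2⟩, hcr, h3⟩
      rcases hpair with ⟨hx, hy⟩ | ⟨hx, hy⟩
      · -- c(e,00) = i, c(e,b) = j : the j-strand is {a, b}
        by_cases hra : r (e, G.a e) = true
        · refine hmemof (G.a e) (tab1.trans hy) hra ?_
          have hσ : G.σ2 (e, G.a e) = (e, kAdd (G.a e) (G.b e)) := by rw [σ2_apply]
          rw [hσ, tab2]
          exact hx
        · have hb : (e, G.b e) = t (e, G.a e) := by
            show _ = (e, kAdd (G.a e) (d e))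
            rw [hdcr e hcr, k_a_ab]
          have hrb : r (e, G.b e) = true := by
            rw [hb, hrt]
            rw [Bool.not_eq_true] at hra
            rw [hra]
            rfl
          refine hmemof (G.b e) hy hrb ?_
          have hσ : G.σ2 (e, G.b e) = (e, (false, false)) := by rw [σ2_apply, k_aa]
          rw [hσ]
          exact hx
      · -- c(e,00) = j, c(e,b) = i : the j-strand is {00, a+b}
        by_cases hr0 : r (e, (false, false)) = true
        · refine hmemof (false, false) hx hr0 ?_
          rw [hσ2v]
          exact hy
        · have hab : (e, kAdd (G.a e) (G.b e)) = t (e, (false, false)) := by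
            show _ = (e, kAdd (false, false) (d e))
            rw [hdcr e hcr, kz]
          have hrab : r (e, kAdd (G.a e) (G.b e)) = true := by
            rw [hab, hrt]
            rw [Bool.not_eq_true] at hr0
            rw [hr0]
            rfl
          refine hmemof (kAdd (G.a e) (G.b e)) (tab2.trans hx) hrab ?_
          have hσ : G.σ2 (e, kAdd (G.a e) (G.b e)) = (e, G.a e) := by
            rw [σ2_apply, kAdd_kAdd]
          rw [hσ, tab1]
          exact hy
  rw [← hbij]
  exact hBeven

lemma cross_even (G : RibbonGraph E)
    (heuler : G.nVerts + G.nFaces = G.nEdges + 2 * G.nComps)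
    (c : Flags E → Fin k) (hadm : G.Admissible c) :
    Even ((univ.filter (fun e => G.CrossAt c e)).card) := by
  have hfib := Finset.card_eq_sum_card_fiberwise
    (f := fun e => s(c (e, (false, false)), c (G.σ2 (e, (false, false)))))
    (s := univ.filter (fun e => G.CrossAt c e)) (t := univ) (fun x _ => mem_univ _)
  rw [hfib]
  refine Finset.even_sum _ ?_
  intro z hz
  have key : ∀ x y : Fin k, Even (((univ.filter (fun e => G.CrossAt c e)).filter
      (fun e => s(c (e, (false, false)), c (G.σ2 (e, (false, false)))) = s(x, y))).card) := by
    intro x y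
    rw [Finset.filter_filter]
    by_cases hxy : x = y
    · subst hxy
      rw [Nat.even_iff]
      convert Nat.zero_mod 2 using 2
      rw [Finset.card_eq_zero, Finset.filter_eq_empty_iff]
      intro e _
      rintro ⟨hcr, hpair⟩
      rw [Sym2.eq_iff] at hpair
      have hne := cross_ne G c e hcr
      rcases hpair with ⟨h1, h2⟩ | ⟨h1, h2⟩ <;> exact hne (h1.trans h2.symm)
    · exact cross_pair_even G heuler c hadm x y hxy
  exact Sym2.ind key z

end Parity

section Assembly

open scoped Classical

variable {k : ℕ} [Fintype E] [DecidableEq E]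

lemma petrial_σ0_apply (G : RibbonGraph E) (A : Finset E) (e : E) (p : Bool × Bool) :
    (G.petrial A).σ0 (e, p) = if e ∈ A then G.σ0 (G.σ2 (e, p)) else G.σ0 (e, p) := by
  show (e, kAdd p (if e ∈ A then kAdd (G.a e) (G.b e) else G.a e)) = _
  by_cases h : e ∈ A
  · rw [if_pos h, if_pos h, σ02_apply, k_pba]
  · rw [if_neg h, if_neg h, σ0_apply]

lemma constant_iff (G : RibbonGraph E) (A : Finset E) (c : Flags E → Fin k) :
    (∀ x y, (G.petrial A).faceStep x y → c x = c y) ↔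
      ((∀ f, c (G.s1 f) = c f) ∧ ∀ e, if e ∈ A then Cc G c e else Wc G c e) := by
  constructor
  · intro h
    refine ⟨fun f => (h f (G.s1 f) (Or.inr rfl)).symm, fun e => ?_⟩
    by_cases he : e ∈ A
    · rw [if_pos he]
      intro p
      have hh := (h (e, p) ((G.petrial A).σ0 (e, p)) (Or.inl rfl)).symm
      rwa [petrial_σ0_apply, if_pos he] at hh
    · rw [if_neg he]
      intro p
      have hh := (h (e, p) ((G.petrial A).σ0 (e, p)) (Or.inl rfl)).symm
      rwa [petrial_σ0_apply, if_neg he] at hh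
  · rintro ⟨h1, h2⟩ x y hxy
    rcases hxy with h | h
    · subst h
      obtain ⟨e, p⟩ := x
      have h2e := h2 e
      by_cases he : e ∈ A
      · rw [if_pos he] at h2e
        rw [petrial_σ0_apply, if_pos he]
        exact (h2e p).symm
      · rw [if_neg he] at h2e
        rw [petrial_σ0_apply, if_neg he]
        exact (h2e p).symm
    · subst h
      exact (h1 x).symm

lemma card_states (G : RibbonGraph E) (A : Finset E) (k : ℕ) :
    ((k : ℤ)) ^ ((G.petrial A).nFaces)
      = (((univ : Finset (Flags E → Fin k)).filter
          (fun c => ∀ x y, (G.petrial A).faceStep x y → c x = c y)).card : ℤ) := by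
  have h2 : (k : ℕ) ^ ((G.petrial A).nFaces)
      = ((univ : Finset (Flags E → Fin k)).filter
          (fun c => ∀ x y, (G.petrial A).faceStep x y → c x = c y)).card := by
    rw [nFaces, ← card_const (G.petrial A).faceStep k, Nat.card_eq_fintype_card,
      Fintype.card_subtype]
  exact_mod_cast congrArg (Nat.cast : ℕ → ℤ) h2

lemma boole_and (P Q : Prop) [Decidable P] [Decidable Q] :
    (if P ∧ Q then (1:ℤ) else 0) = (if P then 1 else 0) * (if Q then 1 else 0) := by
  by_cases hP : P <;> by_cases hQ : Q <;> simp [hP, hQ]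

end Assembly


open scoped Classical in
/-- If `G` is a plane graph, then for every positive integer `k`, `P(G;k)` equals the
number of admissible `k`-valuations of the medial graph `G_m`. -/
theorem stmt16 {E : Type} [Fintype E] [DecidableEq E] (G : RibbonGraph E)
    (hpl : G.Plane) (k : ℕ) (hk : 0 < k) :
    G.penrose.eval (k : ℤ) =
      (((Finset.univ : Finset (Flags E → Fin k)).filter
        (fun c => G.Admissible c)).card : ℤ) := by
  classical
  have hP : G.penrose.eval (k : ℤ)
      = ∑ A ∈ (univ : Finset E).powerset,
          (-1 : ℤ) ^ A.card * (k : ℤ) ^ ((G.petrial A).nFaces) := by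
    rw [penrose, Polynomial.eval_finset_sum]
    refine Finset.sum_congr rfl (fun A _ => ?_)
    simp
  rw [hP]
  have hstep2 : ∀ A ∈ (univ : Finset E).powerset,
      (-1 : ℤ) ^ A.card * (k : ℤ) ^ ((G.petrial A).nFaces)
      = ∑ c ∈ (univ : Finset (Flags E → Fin k)),
          (-1 : ℤ) ^ A.card
            * (if (∀ x y, (G.petrial A).faceStep x y → c x = c y) then 1 else 0) := by
    intro A _
    rw [← Finset.mul_sum, Finset.sum_boole, ← card_states]
  rw [Finset.sum_congr rfl hstep2, Finset.sum_comm]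
  have hinner : ∀ c : Flags E → Fin k,
      ∑ A ∈ (univ : Finset E).powerset,
        (-1 : ℤ) ^ A.card
          * (if (∀ x y, (G.petrial A).faceStep x y → c x = c y) then 1 else 0)
      = (if (∀ f, c (G.s1 f) = c f) then (1:ℤ) else 0)
        * ∏ e ∈ univ, ((if Wc G c e then (1:ℤ) else 0) - (if Cc G c e then 1 else 0)) := by
    intro c
    have hcond : ∀ A : Finset E,
        (if (∀ x y, (G.petrial A).faceStep x y → c x = c y) then (1:ℤ) else 0)
        = (if (∀ f, c (G.s1 f) = c f) then (1:ℤ) else 0)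
          * ∏ e ∈ univ, (if (if e ∈ A then Cc G c e else Wc G c e) then (1:ℤ) else 0) := by
      intro A
      rw [Finset.prod_boole]
      by_cases hval : ∀ f, c (G.s1 f) = c f
      · by_cases hall : ∀ e ∈ (univ : Finset E), (if e ∈ A then Cc G c e else Wc G c e)
        · rw [if_pos ((constant_iff G A c).mpr ⟨hval, fun e => hall e (mem_univ e)⟩),
            if_pos hval, if_pos hall, one_mul]
        · rw [if_neg (fun h => hall (fun e _ => ((constant_iff G A c).mp h).2 e)),
            if_neg hall, mul_zero]
      · rw [if_neg (fun h => hval ((constant_iff G A c).mp h).1), if_neg hval, zero_mul]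
    calc ∑ A ∈ (univ : Finset E).powerset,
        (-1 : ℤ) ^ A.card
          * (if (∀ x y, (G.petrial A).faceStep x y → c x = c y) then 1 else 0)
        = ∑ A ∈ (univ : Finset E).powerset,
          (if (∀ f, c (G.s1 f) = c f) then (1:ℤ) else 0)
            * ((∏ e ∈ A, -(if Cc G c e then (1:ℤ) else 0))
              * ∏ e ∈ univ \ A, (if Wc G c e then (1:ℤ) else 0)) := by
          refine Finset.sum_congr rfl (fun A hA => ?_)
          rw [hcond A]
          rw [Finset.mem_powerset] at hA
          have hsplit : ∏ e ∈ univ,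
              (if (if e ∈ A then Cc G c e else Wc G c e) then (1:ℤ) else 0)
              = (∏ e ∈ univ \ A, (if Wc G c e then (1:ℤ) else 0))
                * ∏ e ∈ A, (if Cc G c e then (1:ℤ) else 0) := by
            rw [← Finset.prod_sdiff hA]
            congr 1
            · exact Finset.prod_congr rfl (fun e he =>
                if_congr (iff_of_eq (if_neg (Finset.mem_sdiff.mp he).2)) rfl rfl)
            · exact Finset.prod_congr rfl (fun e he =>
                if_congr (iff_of_eq (if_pos he)) rfl rfl)
          have hneg : ∏ e ∈ A, -(if Cc G c e then (1:ℤ) else 0)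
              = (-1:ℤ) ^ A.card * ∏ e ∈ A, (if Cc G c e then (1:ℤ) else 0) := by
            rw [← Finset.prod_const, ← Finset.prod_mul_distrib]
            exact Finset.prod_congr rfl (fun e _ => by rw [neg_one_mul])
          rw [hsplit, hneg]
          ring
      _ = (if (∀ f, c (G.s1 f) = c f) then (1:ℤ) else 0)
            * ∑ A ∈ (univ : Finset E).powerset,
              ((∏ e ∈ A, -(if Cc G c e then (1:ℤ) else 0))
                * ∏ e ∈ univ \ A, (if Wc G c e then (1:ℤ) else 0)) := by
          rw [Finset.mul_sum]
      _ = (if (∀ f, c (G.s1 f) = c f) then (1:ℤ) else 0)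
            * ∏ e ∈ univ, (-(if Cc G c e then (1:ℤ) else 0) + (if Wc G c e then 1 else 0)) := by
          rw [Finset.prod_add]
      _ = (if (∀ f, c (G.s1 f) = c f) then (1:ℤ) else 0)
            * ∏ e ∈ univ, ((if Wc G c e then (1:ℤ) else 0) - (if Cc G c e then 1 else 0)) := by
          congr 1
          exact Finset.prod_congr rfl (fun e _ => by rw [neg_add_eq_sub])
  have hper : ∀ c : Flags E → Fin k,
      (if (∀ f, c (G.s1 f) = c f) then (1:ℤ) else 0)
        * ∏ e ∈ univ, ((if Wc G c e then (1:ℤ) else 0) - (if Cc G c e then 1 else 0))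
      = (if G.Admissible c then 1 else 0) := by
    intro c
    by_cases hadm : G.Admissible c
    · rw [if_pos hadm, if_pos (show (∀ f, c (G.s1 f) = c f) from hadm.1), one_mul]
      have hfac : ∀ e ∈ (univ : Finset E),
          ((if Wc G c e then (1:ℤ) else 0) - (if Cc G c e then 1 else 0))
          = (if G.CrossAt c e then -1 else 1) := by
        intro e _
        rcases hadm.2 e with hW | hC
        · obtain ⟨hw, hnc⟩ := (whiteAt_iff G c e).mp hW
          rw [if_pos hw, if_neg hnc,
            if_neg (fun hcr => ((crossAt_iff G c e).mp hcr).2 hw)]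
          norm_num
        · obtain ⟨hc, hnw⟩ := (crossAt_iff G c e).mp hC
          rw [if_neg hnw, if_pos hc, if_pos hC]
          norm_num
      rw [Finset.prod_congr rfl hfac,
        ← Finset.prod_filter_mul_prod_filter_not univ (fun e => G.CrossAt c e)]
      have hc1 : ∏ e ∈ univ.filter (fun e => G.CrossAt c e),
          (if G.CrossAt c e then (-1:ℤ) else 1) = (-1:ℤ) ^ (univ.filter
            (fun e => G.CrossAt c e)).card := by
        rw [Finset.prod_congr rfl (fun e he => by rw [if_pos (Finset.mem_filter.mp he).2]),
          Finset.prod_const]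
      have hc2 : ∏ e ∈ univ.filter (fun e => ¬ G.CrossAt c e),
          (if G.CrossAt c e then (-1:ℤ) else 1) = 1 := by
        rw [Finset.prod_congr rfl (fun e he => by rw [if_neg (Finset.mem_filter.mp he).2]),
          Finset.prod_const_one]
      rw [hc1, hc2, mul_one]
      exact Even.neg_one_pow (cross_even G hpl.2 c hadm)
    · rw [if_neg hadm]
      by_cases hval : ∀ f, c (G.s1 f) = c f
      · rw [if_pos hval, one_mul]
        have hbad : ¬ ∀ e, G.WhiteAt c e ∨ G.CrossAt c e := fun h => hadm ⟨hval, h⟩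
        push_neg at hbad
        obtain ⟨e, hnw, hnc⟩ := hbad
        refine Finset.prod_eq_zero (mem_univ e) ?_
        have h1 : ¬ (Wc G c e ∧ ¬ Cc G c e) := fun h => hnw ((whiteAt_iff G c e).mpr h)
        have h2 : ¬ (Cc G c e ∧ ¬ Wc G c e) := fun h => hnc ((crossAt_iff G c e).mpr h)
        by_cases hw : Wc G c e
        · by_cases hc : Cc G c e
          · rw [if_pos hw, if_pos hc, sub_self]
          · exact absurd ⟨hw, hc⟩ h1
        · by_cases hc : Cc G c e
          · exact absurd ⟨hc, hw⟩ h2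
          · rw [if_neg hw, if_neg hc, sub_self]
      · rw [if_neg hval, zero_mul]
  rw [Finset.sum_congr rfl (fun c _ => (hinner c).trans (hper c)), Finset.sum_boole]

end RibbonGraph

end Penrose
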